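/- arXiv:2206.02345 — 5 statements merged into one kernel-verified Lean document; each statement's English description precedes it below -/
import Mathlib

section
/- Let (Ω, μ) be a measure space and f, g : Ω → ℝ be measurable, nonnegative, integrable functions with ∫ f dμ = ∫ g dμ = 1, and let n1, n2 > 0 be real numbers. Then ∫ (n1+n2)·f·g/(n1·f + n2·g) dμ = 1 + (1/2)·∫ ((n1·f − n2·g)/(n1·f + n2·g))·(g − f) dμ, where all quotients use the convention that division by zero yields zero. -/
open MeasureTheory

theorem stmt_2 {Ω : Type*} [MeasurableSpace Ω] (μ : Measure Ω)
    (f g : Ω → ℝ) (hf : Measurable f) (hg : Measurable g)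
    (hf0 : ∀ x, 0 ≤ f x) (hg0 : ∀ x, 0 ≤ g x)
    (hfi : Integrable f μ) (hgi : Integrable g μ)
    (hf1 : ∫ x, f x ∂μ = 1) (hg1 : ∫ x, g x ∂μ = 1)
    (n1 n2 : ℝ) (hn1 : 0 < n1) (hn2 : 0 < n2) :
    ∫ x, (n1 + n2) * f x * g x / (n1 * f x + n2 * g x) ∂μ
      = 1 + (1 / 2) * ∫ x, ((n1 * f x - n2 * g x) / (n1 * f x + n2 * g x)) * (g x - f x) ∂μ := by
  have key : ∀ x, (n1 + n2) * f x * g x / (n1 * f x + n2 * g x)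
      = (f x + g x) / 2
        + (1 / 2) * (((n1 * f x - n2 * g x) / (n1 * f x + n2 * g x)) * (g x - f x)) := by
    intro x
    by_cases h : n1 * f x + n2 * g x = 0
    · have hfx : f x = 0 := by nlinarith [hf0 x, hg0 x]
      have hgx : g x = 0 := by nlinarith [hf0 x, hg0 x]
      simp [hfx, hgx]
    · field_simp
      ring
  have hbound : ∀ x,
      ‖((n1 * f x - n2 * g x) / (n1 * f x + n2 * g x)) * (g x - f x)‖ ≤ ‖g x - f x‖ := by
    intro x
    rw [Real.norm_eq_abs, Real.norm_eq_abs, abs_mul]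
    have h1 : |(n1 * f x - n2 * g x) / (n1 * f x + n2 * g x)| ≤ 1 := by
      rw [abs_div]
      rcases eq_or_ne (n1 * f x + n2 * g x) 0 with h | h
      · simp [h]
      · have hden : 0 < n1 * f x + n2 * g x := by
          rcases lt_or_eq_of_le (by nlinarith [hf0 x, hg0 x] :
            (0:ℝ) ≤ n1 * f x + n2 * g x) with h' | h'
          · exact h'
          · exact absurd h'.symm h
        rw [abs_of_pos hden, div_le_one hden, abs_le]
        constructor <;> nlinarith [hf0 x, hg0 x]
    nlinarith [abs_nonneg (g x - f x), abs_nonneg ((n1 * f x - n2 * g x) / (n1 * f x + n2 * g x))]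
  have hmeas : Measurable fun x =>
      ((n1 * f x - n2 * g x) / (n1 * f x + n2 * g x)) * (g x - f x) := by
    exact (((hf.const_mul n1).sub (hg.const_mul n2)).div
      ((hf.const_mul n1).add (hg.const_mul n2))).mul (hg.sub hf)
  have hih : Integrable (fun x =>
      ((n1 * f x - n2 * g x) / (n1 * f x + n2 * g x)) * (g x - f x)) μ :=
    (hgi.sub hfi).mono hmeas.aestronglyMeasurable (Filter.Eventually.of_forall hbound)
  have hifg : Integrable (fun x => (f x + g x) / 2) μ := ((hfi.add hgi).div_const 2)
  calc ∫ x, (n1 + n2) * f x * g x / (n1 * f x + n2 * g x) ∂μ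
      = ∫ x, ((f x + g x) / 2
        + (1 / 2) * (((n1 * f x - n2 * g x) / (n1 * f x + n2 * g x)) * (g x - f x))) ∂μ := by
        exact integral_congr_ae (Filter.Eventually.of_forall key)
    _ = (∫ x, (f x + g x) / 2 ∂μ)
        + ∫ x, (1 / 2) * (((n1 * f x - n2 * g x) / (n1 * f x + n2 * g x)) * (g x - f x)) ∂μ :=
        integral_add hifg (hih.const_mul _)
    _ = 1 + (1 / 2) * ∫ x, ((n1 * f x - n2 * g x) / (n1 * f x + n2 * g x)) * (g x - f x) ∂μ := by
        rw [MeasureTheory.integral_const_mul]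
        congr 1
        rw [integral_div, integral_add hfi hgi, hf1, hg1]
        norm_num
end

section
/- Let (Ω, μ) be a measure space and f, g : Ω → ℝ be measurable, nonnegative, integrable functions with ∫ f dμ = ∫ g dμ = 1, and let n1, n2 > 0 be real numbers. Then ∫ ((n1·f − n2·g)/(n1·f + n2·g))·(f − g) dμ = (2·n1·n2/(n1+n2))·∫ (f − g)²/(n1·f + n2·g) dμ, where all quotients use the convention that division by zero yields zero. -/
/-!
Write `D = n₁f + n₂g`. Since `(n₁f - n₂g)(n₁ + n₂) - (n₁ - n₂)D = 2n₁n₂(f - g)`, the integrand on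
the left is `(n₁ - n₂)/(n₁ + n₂) · (f - g) + 2n₁n₂/(n₁ + n₂) · (f - g)²/D` pointwise (both sides
vanish where `D = 0`, as then `f = g = 0`). The first summand integrates to `0` because `f` and
`g` have the same mass, and the left integrand is integrable, being bounded by `f + g`.
-/

open MeasureTheory

theorem abs_sub_div_add_le_one {p q : ℝ} (hp : 0 ≤ p) (hq : 0 ≤ q) : |(p - q) / (p + q)| ≤ 1 := by
  rw [abs_div, abs_of_nonneg (add_nonneg hp hq)]
  exact div_le_one_of_le₀ (abs_sub_le_iff.mpr ⟨by linarith, by linarith⟩) (add_nonneg hp hq)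

theorem mul_sq_sub_div_eq_ratio_mul_sub {n₁ n₂ a b : ℝ} (hn₁ : 0 < n₁) (hn₂ : 0 < n₂)
    (ha : 0 ≤ a) (hb : 0 ≤ b) :
    2 * n₁ * n₂ / (n₁ + n₂) * ((a - b) ^ 2 / (n₁ * a + n₂ * b))
      = (n₁ * a - n₂ * b) / (n₁ * a + n₂ * b) * (a - b) - (n₁ - n₂) / (n₁ + n₂) * (a - b) := by
  rcases (by positivity : 0 ≤ n₁ * a + n₂ * b).eq_or_lt with hD | hD
  · have ha0 : a = 0 := by nlinarith
    have hb0 : b = 0 := by nlinarith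
    simp [ha0, hb0]
  · field_simp
    ring

theorem integrable_ratio_mul_sub {Ω : Type*} [MeasurableSpace Ω] {μ : Measure Ω} {f g : Ω → ℝ}
    (hfi : Integrable f μ) (hgi : Integrable g μ) (hf0 : ∀ x, 0 ≤ f x) (hg0 : ∀ x, 0 ≤ g x)
    {n₁ n₂ : ℝ} (hn₁ : 0 ≤ n₁) (hn₂ : 0 ≤ n₂) :
    Integrable (fun x ↦ (n₁ * f x - n₂ * g x) / (n₁ * f x + n₂ * g x) * (f x - g x)) μ := by
  have hf := hfi.aemeasurable
  have hg := hgi.aemeasurable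
  refine (hfi.add hgi).mono'
    ((((hf.const_mul n₁).sub (hg.const_mul n₂)).div
      ((hf.const_mul n₁).add (hg.const_mul n₂))).mul (hf.sub hg)).aestronglyMeasurable
    (.of_forall fun x ↦ ?_)
  have hratio := abs_sub_div_add_le_one (mul_nonneg hn₁ (hf0 x)) (mul_nonneg hn₂ (hg0 x))
  have hdiff : |f x - g x| ≤ f x + g x :=
    abs_sub_le_iff.mpr ⟨by linarith [hg0 x], by linarith [hf0 x]⟩
  rw [Real.norm_eq_abs, abs_mul, Pi.add_apply]
  calc _ ≤ 1 * |f x - g x| := by gcongr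
    _ ≤ f x + g x := by rwa [one_mul]

theorem stmt_4_general {Ω : Type*} [MeasurableSpace Ω] (μ : Measure Ω)
    (f g : Ω → ℝ)
    (hf0 : ∀ x, 0 ≤ f x) (hg0 : ∀ x, 0 ≤ g x)
    (hfi : Integrable f μ) (hgi : Integrable g μ)
    (hf1 : ∫ x, f x ∂μ = 1) (hg1 : ∫ x, g x ∂μ = 1)
    (n1 n2 : ℝ) (hn1 : 0 < n1) (hn2 : 0 < n2) :
    ∫ x, ((n1 * f x - n2 * g x) / (n1 * f x + n2 * g x)) * (f x - g x) ∂μ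
      = (2 * n1 * n2 / (n1 + n2)) * ∫ x, (f x - g x) ^ 2 / (n1 * f x + n2 * g x) ∂μ := by
  have hdiff : ∫ x, (f x - g x) ∂μ = 0 := by rw [integral_sub hfi hgi, hf1, hg1, sub_self]
  have hdiffi : Integrable (fun x ↦ (n1 - n2) / (n1 + n2) * (f x - g x)) μ :=
    (hfi.sub hgi).const_mul _
  calc _ = ∫ x, ((n1 * f x - n2 * g x) / (n1 * f x + n2 * g x) * (f x - g x)
          - (n1 - n2) / (n1 + n2) * (f x - g x)) ∂μ := by
        rw [integral_sub (integrable_ratio_mul_sub hfi hgi hf0 hg0 hn1.le hn2.le) hdiffi,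
          integral_const_mul, hdiff, mul_zero, sub_zero]
    _ = _ := by
        rw [← integral_const_mul]
        simp_rw [mul_sq_sub_div_eq_ratio_mul_sub hn1 hn2 (hf0 _) (hg0 _)]

theorem stmt_4 {Ω : Type*} [MeasurableSpace Ω] (μ : Measure Ω)
    (f g : Ω → ℝ) (hf : Measurable f) (hg : Measurable g)
    (hf0 : ∀ x, 0 ≤ f x) (hg0 : ∀ x, 0 ≤ g x)
    (hfi : Integrable f μ) (hgi : Integrable g μ)
    (hf1 : ∫ x, f x ∂μ = 1) (hg1 : ∫ x, g x ∂μ = 1)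
    (n1 n2 : ℝ) (hn1 : 0 < n1) (hn2 : 0 < n2) :
    ∫ x, ((n1 * f x - n2 * g x) / (n1 * f x + n2 * g x)) * (f x - g x) ∂μ
      = (2 * n1 * n2 / (n1 + n2)) * ∫ x, (f x - g x) ^ 2 / (n1 * f x + n2 * g x) ∂μ :=
  stmt_4_general μ f g hf0 hg0 hfi hgi hf1 hg1 n1 n2 hn1 hn2
end

section
/- Let (Ω, μ) be a measure space and f, g : Ω → ℝ be measurable, nonnegative, integrable functions with ∫ f dμ = ∫ g dμ = 1, and let n1, n2 > 0 be real numbers. Then ∫ n1·n2·f·g/(n1·f + n2·g) dμ = n1·n2/(n1+n2) − (n1·n2/(n1+n2))²·∫ (f − g)²/(n1·f + n2·g) dμ, where all quotients use the convention that division by zero yields zero. -/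
open MeasureTheory

theorem stmt_6 {Ω : Type*} [MeasurableSpace Ω] (μ : Measure Ω)
    (f g : Ω → ℝ) (hf : Measurable f) (hg : Measurable g)
    (hf0 : ∀ x, 0 ≤ f x) (hg0 : ∀ x, 0 ≤ g x)
    (hfi : Integrable f μ) (hgi : Integrable g μ)
    (hf1 : ∫ x, f x ∂μ = 1) (hg1 : ∫ x, g x ∂μ = 1)
    (n1 n2 : ℝ) (hn1 : 0 < n1) (hn2 : 0 < n2) :
    ∫ x, n1 * n2 * f x * g x / (n1 * f x + n2 * g x) ∂μ
      = n1 * n2 / (n1 + n2)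
        - (n1 * n2 / (n1 + n2)) ^ 2 * ∫ x, (f x - g x) ^ 2 / (n1 * f x + n2 * g x) ∂μ := by
  have hn12 : (0:ℝ) < n1 + n2 := by linarith
  have hn12' : n1 + n2 ≠ 0 := ne_of_gt hn12
  set m := min n1 n2 with hm
  have hmpos : 0 < m := lt_min hn1 hn2
  -- pointwise identity
  have key : ∀ x, n1 * n2 * f x * g x / (n1 * f x + n2 * g x)
      = (n1 * n2 / (n1 + n2) ^ 2) * (n2 * f x + n1 * g x)
        - (n1 * n2 / (n1 + n2)) ^ 2 * ((f x - g x) ^ 2 / (n1 * f x + n2 * g x)) := by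
    intro x
    by_cases hs : n1 * f x + n2 * g x = 0
    · have hfx : f x = 0 := by nlinarith [hf0 x, hg0 x]
      have hgx : g x = 0 := by nlinarith [hf0 x, hg0 x]
      simp [hfx, hgx]
    · field_simp
      ring
  -- integrability of the quadratic term
  have hk_meas : Measurable (fun x => (f x - g x) ^ 2 / (n1 * f x + n2 * g x)) :=
    ((hf.sub hg).pow_const 2).div ((hf.const_mul n1).add (hg.const_mul n2))
  have hk_bound : ∀ x, ‖(f x - g x) ^ 2 / (n1 * f x + n2 * g x)‖
      ≤ ‖(1 / m) * (f x + g x)‖ := by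
    intro x
    have hfx := hf0 x; have hgx := hg0 x
    have hb : (0:ℝ) ≤ (1 / m) * (f x + g x) := by positivity
    by_cases hs : n1 * f x + n2 * g x = 0
    · have hfx0 : f x = 0 := by nlinarith
      have hgx0 : g x = 0 := by nlinarith
      simp [hfx0, hgx0]
    · have hspos : 0 < n1 * f x + n2 * g x := by
        rcases (lt_or_eq_of_le (by positivity : (0:ℝ) ≤ n1 * f x + n2 * g x)) with h | h
        · exact h
        · exact absurd h.symm hs
      have hms : m * (f x + g x) ≤ n1 * f x + n2 * g x := by
        have h1 : m ≤ n1 := min_le_left _ _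
        have h2 : m ≤ n2 := min_le_right _ _
        nlinarith
      have hle : (f x - g x) ^ 2 / (n1 * f x + n2 * g x) ≤ (1 / m) * (f x + g x) := by
        rw [div_le_iff₀ hspos]
        have h1 : (f x - g x) ^ 2 ≤ (f x + g x) ^ 2 := by nlinarith
        have : (f x + g x) ^ 2 * m ≤ (f x + g x) * (n1 * f x + n2 * g x) := by nlinarith
        calc (f x - g x) ^ 2 ≤ (f x + g x) ^ 2 := h1
          _ = (f x + g x) ^ 2 * m * (1/m) := by field_simp
          _ ≤ (f x + g x) * (n1 * f x + n2 * g x) * (1/m) := by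
              apply mul_le_mul_of_nonneg_right this (by positivity)
          _ = 1 / m * (f x + g x) * (n1 * f x + n2 * g x) := by ring
      have hknn : (0:ℝ) ≤ (f x - g x) ^ 2 / (n1 * f x + n2 * g x) := by positivity
      rw [Real.norm_of_nonneg hknn, Real.norm_of_nonneg hb]
      exact hle
  have hk_int : Integrable (fun x => (f x - g x) ^ 2 / (n1 * f x + n2 * g x)) μ := by
    refine Integrable.mono ((hfi.add hgi).const_mul (1 / m)) hk_meas.aestronglyMeasurable ?_
    exact Filter.Eventually.of_forall hk_bound
  have hA_int : Integrable (fun x => (n1 * n2 / (n1 + n2) ^ 2) * (n2 * f x + n1 * g x)) μ :=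
    ((hfi.const_mul n2).add (hgi.const_mul n1)).const_mul _
  have hB_int : Integrable
      (fun x => (n1 * n2 / (n1 + n2)) ^ 2 * ((f x - g x) ^ 2 / (n1 * f x + n2 * g x))) μ :=
    hk_int.const_mul _
  calc ∫ x, n1 * n2 * f x * g x / (n1 * f x + n2 * g x) ∂μ
      = ∫ x, ((n1 * n2 / (n1 + n2) ^ 2) * (n2 * f x + n1 * g x)
          - (n1 * n2 / (n1 + n2)) ^ 2 * ((f x - g x) ^ 2 / (n1 * f x + n2 * g x))) ∂μ := by
        exact integral_congr_ae (Filter.Eventually.of_forall key)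
    _ = (∫ x, (n1 * n2 / (n1 + n2) ^ 2) * (n2 * f x + n1 * g x) ∂μ)
        - ∫ x, (n1 * n2 / (n1 + n2)) ^ 2 * ((f x - g x) ^ 2 / (n1 * f x + n2 * g x)) ∂μ :=
        integral_sub hA_int hB_int
    _ = n1 * n2 / (n1 + n2)
        - (n1 * n2 / (n1 + n2)) ^ 2 * ∫ x, (f x - g x) ^ 2 / (n1 * f x + n2 * g x) ∂μ := by
        rw [integral_const_mul, integral_const_mul]
        have : ∫ x, (n2 * f x + n1 * g x) ∂μ = n1 + n2 := by
          rw [integral_add (hfi.const_mul n2) (hgi.const_mul n1),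
            integral_const_mul, integral_const_mul, hf1, hg1]
          ring
        rw [this]
        field_simp
end

section
/- Let (Ω, μ) be a measure space and f, g : Ω → ℝ be measurable, nonnegative, integrable functions with ∫ f dμ = ∫ g dμ = 1, and let n1, n2 > 0 be real numbers. Then ∫ n1·n2·f·g/(n1·f + n2·g) dμ = n1·n2/(n1+n2) if and only if f = g μ-almost everywhere, where the quotient uses the convention that division by zero yields zero. -/
open MeasureTheory

theorem stmt_7 {Ω : Type*} [MeasurableSpace Ω] (μ : Measure Ω)
    (f g : Ω → ℝ) (hf : Measurable f) (hg : Measurable g)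
    (hf0 : ∀ x, 0 ≤ f x) (hg0 : ∀ x, 0 ≤ g x)
    (hfi : Integrable f μ) (hgi : Integrable g μ)
    (hf1 : ∫ x, f x ∂μ = 1) (hg1 : ∫ x, g x ∂μ = 1)
    (n1 n2 : ℝ) (hn1 : 0 < n1) (hn2 : 0 < n2) :
    (∫ x, n1 * n2 * f x * g x / (n1 * f x + n2 * g x) ∂μ = n1 * n2 / (n1 + n2))
      ↔ f =ᵐ[μ] g := by
  have hn12 : (0:ℝ) < n1 + n2 := by linarith
  set a := n1 * n2 ^ 2 / (n1 + n2) ^ 2 with ha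
  set b := n1 ^ 2 * n2 / (n1 + n2) ^ 2 with hb
  set t := n1 ^ 2 * n2 ^ 2 / (n1 + n2) ^ 2 with ht
  have ht0 : (0:ℝ) < t := by positivity
  set h : Ω → ℝ := fun x => n1 * n2 * f x * g x / (n1 * f x + n2 * g x) with hh
  set D : Ω → ℝ := fun x => a * f x + b * g x - h x with hD
  have hSnn : ∀ x, 0 ≤ n1 * f x + n2 * g x := fun x =>
    add_nonneg (mul_nonneg hn1.le (hf0 x)) (mul_nonneg hn2.le (hg0 x))
  have key : ∀ x, D x = t * (f x - g x) ^ 2 / (n1 * f x + n2 * g x) := by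
    intro x
    rcases eq_or_lt_of_le (hSnn x) with hS | hS
    · have hfx : f x = 0 := by nlinarith [hf0 x, hg0 x]
      have hgx : g x = 0 := by nlinarith [hf0 x, hg0 x]
      simp [hD, hh, hfx, hgx]
    · have hS' : n1 * f x + n2 * g x ≠ 0 := ne_of_gt hS
      simp only [hD, hh, ha, hb, ht]
      field_simp
      ring
  have hD0 : ∀ x, 0 ≤ D x := by
    intro x
    rw [key x]
    have := hSnn x
    positivity
  have hDzero : ∀ x, (D x = 0 ↔ f x = g x) := by
    intro x
    rw [key x]
    constructor
    · intro h0
      by_contra hne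
      have hS : 0 < n1 * f x + n2 * g x := by
        rcases (hf0 x).lt_or_eq with h1 | h1
        · nlinarith [hg0 x]
        · have : 0 < g x := (hg0 x).lt_of_ne (fun hc => hne (by rw [← h1, ← hc]))
          nlinarith
      rw [div_eq_zero_iff] at h0
      rcases h0 with h0 | h0
      · rcases mul_eq_zero.mp h0 with h0 | h0
        · exact absurd h0 ht0.ne'
        · exact hne (by nlinarith [sq_nonneg (f x - g x)])
      · exact absurd h0 hS.ne'
    · intro h0
      rw [h0]
      simp
  have hh0 : ∀ x, 0 ≤ h x := by
    intro x
    exact div_nonneg (mul_nonneg (mul_nonneg (mul_nonneg hn1.le hn2.le) (hf0 x)) (hg0 x)) (hSnn x)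
  have hMh : Measurable h :=
    (((measurable_const.mul hf).mul hg)).div ((measurable_const.mul hf).add (measurable_const.mul hg))
  have hbound : ∀ x, ‖h x‖ ≤ a * f x + b * g x := by
    intro x
    rw [Real.norm_eq_abs, abs_of_nonneg (hh0 x)]
    have := hD0 x
    simp only [hD] at this
    linarith
  have hInt : Integrable (fun x => a * f x + b * g x) μ :=
    (hfi.const_mul a).add (hgi.const_mul b)
  have hih : Integrable h μ := hInt.mono' hMh.aestronglyMeasurable (ae_of_all _ hbound)
  have hiD : Integrable D μ := hInt.sub hih
  have hintD : ∫ x, D x ∂μ = (a + b) - ∫ x, h x ∂μ := by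
    rw [show (∫ x, D x ∂μ) = ∫ x, (a * f x + b * g x) - h x ∂μ from rfl,
      integral_sub hInt hih, integral_add (hfi.const_mul a) (hgi.const_mul b),
      integral_const_mul, integral_const_mul, hf1, hg1]
    ring
  have hab : a + b = n1 * n2 / (n1 + n2) := by
    rw [ha, hb]
    field_simp
    ring
  have step1 : (∫ x, h x ∂μ = n1 * n2 / (n1 + n2)) ↔ ∫ x, D x ∂μ = 0 := by
    rw [hintD, hab]
    constructor <;> intro h' <;> linarith
  rw [show (∫ x, n1 * n2 * f x * g x / (n1 * f x + n2 * g x) ∂μ) = ∫ x, h x ∂μ from rfl,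
    step1, integral_eq_zero_iff_of_nonneg hD0 hiD]
  exact Filter.eventually_congr (Filter.Eventually.of_forall fun x => by
    simpa using hDzero x)
end

section
/- Let ψ denote the digamma function, i.e., ψ = deriv (fun x => Real.log (Real.Gamma x)). For all real α > 0 and β > 0, ψ(α + β) − ψ(α) ≤ Σ_{k=0}^{⌊β⌋} 1/(α + k). -/
/-!
Write `ψ` for the derivative of `log ∘ Γ`. Differentiating `log Γ(x + 1) = log x + log Γ(x)`
gives `ψ(x + 1) = ψ(x) + 1 / x`, hence `ψ(α + n) - ψ(α) = ∑_{k < n} 1 / (α + k)`. Since `log ∘ Γ`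
is convex on `(0, ∞)` (Bohr–Mollerup), `ψ` is monotone there, and `β ≤ ⌊β⌋ + 1` gives
`ψ(α + β) ≤ ψ(α + ⌊β⌋ + 1)`.
-/

open Real Set Filter

lemma differentiableAt_log_Gamma {x : ℝ} (hx : 0 < x) :
    DifferentiableAt ℝ (fun x => log (Gamma x)) x :=
  (differentiableAt_Gamma fun m => ((neg_nonpos.mpr m.cast_nonneg).trans_lt hx).ne').log
    (Gamma_pos_of_pos hx).ne'

lemma deriv_log_Gamma_add_one {x : ℝ} (hx : 0 < x) :
    deriv (fun x => log (Gamma x)) (x + 1) = deriv (fun x => log (Gamma x)) x + 1 / x := by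
  rw [← deriv_comp_add_const, one_div, ← deriv_log,
    ← deriv_add (differentiableAt_log_Gamma hx) (differentiableAt_log hx.ne')]
  apply EventuallyEq.deriv_eq
  filter_upwards [eventually_gt_nhds hx] with y hy
  rw [Pi.add_apply, Gamma_add_one hy.ne', log_mul hy.ne' (Gamma_pos_of_pos hy).ne', add_comm]

lemma deriv_log_Gamma_add_nat {x : ℝ} (hx : 0 < x) (n : ℕ) :
    deriv (fun x => log (Gamma x)) (x + n)
      = deriv (fun x => log (Gamma x)) x + ∑ k ∈ Finset.range n, 1 / (x + k) := by
  induction n with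
  | zero => simp
  | succ n ih =>
    rw [Nat.cast_succ, ← add_assoc, deriv_log_Gamma_add_one (by positivity), ih,
      Finset.sum_range_succ, add_assoc]

lemma monotoneOn_deriv_log_Gamma : MonotoneOn (deriv fun x => log (Gamma x)) (Ioi 0) :=
  convexOn_log_Gamma.monotoneOn_deriv fun _ hx => differentiableAt_log_Gamma hx

theorem stmt_13 (ψ : ℝ → ℝ) (hψ : ψ = deriv (fun x => Real.log (Real.Gamma x)))
    (α β : ℝ) (hα : 0 < α) (hβ : 0 < β) :
    ψ (α + β) - ψ α ≤ ∑ k ∈ Finset.range (⌊β⌋₊ + 1), 1 / (α + (k : ℝ)) := by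
  subst hψ
  have hβ_le : β ≤ ((⌊β⌋₊ + 1 : ℕ) : ℝ) := by
    push_cast
    exact (Nat.lt_floor_add_one β).le
  have hψ_le := monotoneOn_deriv_log_Gamma (show 0 < α + β by positivity)
    (show (0 : ℝ) < α + (⌊β⌋₊ + 1 : ℕ) by positivity) (by linarith)
  rw [deriv_log_Gamma_add_nat hα] at hψ_le
  linarith
end
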